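/- Let Ω be a set, E a closed subspace of ℓ^∞(Ω), O ⊆ ℂᵈ open, and f : O × Ω → ℂ bounded with f(z, ·) ∈ E for each z ∈ O and f(·, t) holomorphic for each t ∈ Ω. Then the map F : O → E, F(z) = f(z, ·), is a bounded holomorphic E-valued function, and for every a ∈ O and multi-index α, the function t ↦ D^α_z f(z, t)|_{z=a} belongs to E and equals D^α F(a). -/

import Mathlib

open ENNReal

set_option synthInstance.maxHeartbeats 1000000
set_option maxHeartbeats 1000000
/-- partial complex derivative in coordinate direction `j` -/
noncomputable def pderiv' {E : Type*} [NormedAddCommGroup E] [NormedSpace ℂ E]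
    {d : ℕ} (j : Fin d) (f : (Fin d → ℂ) → E) : (Fin d → ℂ) → E :=
  fun z => fderiv ℂ f z (Pi.single j 1)

/-- iterated partial derivative `D^α = ∏_j (∂/∂z_j)^{α_j}` for a multi-index `α ∈ ℕ₀ᵈ` -/
noncomputable def Dpartial {E : Type*} [NormedAddCommGroup E] [NormedSpace ℂ E]
    {d : ℕ} (α : Fin d → ℕ) (f : (Fin d → ℂ) → E) : (Fin d → ℂ) → E :=
  Fin.foldr d (fun j g => (pderiv' j)^[α j] g) f

section Aux
open Metric Complex

-- coefficient bound for the Cauchy power series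
lemma coeff_bound {g : ℂ → ℂ} {c : ℂ} {R C : ℝ} (hR : 0 < R)
    (hd : DifferentiableOn ℂ g (closedBall c R))
    (hC : ∀ z ∈ closedBall c R, ‖g z‖ ≤ C) (n : ℕ) :
    ‖(cauchyPowerSeries g c R).coeff n‖ ≤ C / R ^ n := by
  have hC0 : 0 ≤ C := le_trans (norm_nonneg _) (hC c (mem_closedBall_self hR.le))
  have h1 : ‖cauchyPowerSeries g c R n‖ ≤
      ((2 * Real.pi)⁻¹ * ∫ θ : ℝ in (0)..2 * Real.pi, ‖g (circleMap c R θ)‖) * |R|⁻¹ ^ n :=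
    norm_cauchyPowerSeries_le g c R n
  have hsub : ∀ θ : ℝ, circleMap c R θ ∈ closedBall c R := by
    intro θ
    simpa using circleMap_mem_closedBall c hR.le θ
  have hint : (∫ θ : ℝ in (0)..2 * Real.pi, ‖g (circleMap c R θ)‖) ≤
      ∫ θ : ℝ in (0)..2 * Real.pi, C := by
    apply intervalIntegral.integral_mono_on (by positivity)
    · apply ContinuousOn.intervalIntegrable
      apply ContinuousOn.norm
      exact (hd.continuousOn.comp (continuous_circleMap c R).continuousOn
        (fun θ _ => hsub θ))
    · exact intervalIntegrable_const
    · intro θ _; exact hC _ (hsub θ)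
  have h2 : (2 * Real.pi)⁻¹ * ∫ θ : ℝ in (0)..2 * Real.pi, ‖g (circleMap c R θ)‖ ≤ C := by
    rw [intervalIntegral.integral_const] at hint
    have hπ : (0:ℝ) < 2 * Real.pi := by positivity
    calc (2 * Real.pi)⁻¹ * ∫ θ : ℝ in (0)..2 * Real.pi, ‖g (circleMap c R θ)‖
        ≤ (2 * Real.pi)⁻¹ * ((2 * Real.pi - 0) • C) := by
          apply mul_le_mul_of_nonneg_left hint (by positivity)
      _ = C := by rw [sub_zero, smul_eq_mul]; field_simp
  have h3 : ‖(cauchyPowerSeries g c R).coeff n‖ = ‖cauchyPowerSeries g c R n‖ :=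
    (FormalMultilinearSeries.norm_apply_eq_norm_coef).symm
  rw [h3]
  calc ‖cauchyPowerSeries g c R n‖
      ≤ ((2 * Real.pi)⁻¹ * ∫ θ : ℝ in (0)..2 * Real.pi, ‖g (circleMap c R θ)‖) * |R|⁻¹ ^ n := h1
    _ ≤ C * |R|⁻¹ ^ n := by
        apply mul_le_mul_of_nonneg_right h2 (by positivity)
    _ = C / R ^ n := by
        rw [abs_of_pos hR, div_eq_mul_inv, inv_pow]

lemma onevar_deriv_bound {g : ℂ → ℂ} {c : ℂ} {R C : ℝ} (hR : 0 < R)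
    (hd : DifferentiableOn ℂ g (closedBall c R))
    (hC : ∀ z ∈ closedBall c R, ‖g z‖ ≤ C) :
    ‖deriv g c‖ ≤ C / R := by
  lift R to NNReal using hR.le with R'
  have hR0 : (0 : NNReal) < R' := by exact_mod_cast hR
  have hp : HasFPowerSeriesOnBall g (cauchyPowerSeries g c R') c R' :=
    hd.hasFPowerSeriesOnBall hR0
  have h1 : deriv g c = (cauchyPowerSeries g c R').coeff 1 := hp.hasFPowerSeriesAt.deriv
  rw [h1]
  simpa using coeff_bound hR hd hC 1

lemma onevar_taylor2 {g : ℂ → ℂ} {c : ℂ} {R C : ℝ} (hR : 0 < R)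
    (hd : DifferentiableOn ℂ g (closedBall c R))
    (hC : ∀ z ∈ closedBall c R, ‖g z‖ ≤ C) {w : ℂ} (hw : ‖w‖ ≤ R / 2) :
    ‖g (c + w) - g c - deriv g c * w‖ ≤ 2 * C / R ^ 2 * ‖w‖ ^ 2 := by
  have hC0 : 0 ≤ C := le_trans (norm_nonneg _) (hC c (mem_closedBall_self hR.le))
  lift R to NNReal using hR.le with R'
  have hR0 : (0 : NNReal) < R' := by exact_mod_cast hR
  set p := cauchyPowerSeries g c R' with hpdef
  have hp : HasFPowerSeriesOnBall g p c R' := hd.hasFPowerSeriesOnBall hR0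
  have hmem : w ∈ Metric.eball (0 : ℂ) R' := by
    rw [mem_emetric_ball_zero_iff]
    have : ‖w‖ < (R' : ℝ) := lt_of_le_of_lt hw (by linarith)
    exact_mod_cast this
  have hs : HasSum (fun n => w ^ n * p.coeff n) (g (c + w)) := by
    have := hp.hasSum hmem
    simpa [FormalMultilinearSeries.apply_eq_pow_smul_coeff, smul_eq_mul] using this
  have ha0 : p.coeff 0 = g c := hp.coeff_zero _
  have ha1 : p.coeff 1 = deriv g c := hp.hasFPowerSeriesAt.deriv.symm
  have hs2 : HasSum (fun n => w ^ (n + 2) * p.coeff (n + 2))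
      (g (c + w) - g c - deriv g c * w) := by
    have h2 := (hasSum_nat_add_iff' (f := fun n => w ^ n * p.coeff n) 2).mpr hs
    have : (∑ i ∈ Finset.range 2, w ^ i * p.coeff i) = g c + deriv g c * w := by
      simp [Finset.sum_range_succ, ha0, ha1]; ring
    rw [this] at h2
    rw [← sub_sub] at h2
    exact h2
  set q : ℝ := ‖w‖ / (R' : ℝ) with hq
  have hq0 : 0 ≤ q := by positivity
  have hq2 : q ≤ 1 / 2 := by
    rw [hq, div_le_div_iff₀ hR (by norm_num)]
    linarith
  have bnd : ∀ n : ℕ, ‖w ^ (n + 2) * p.coeff (n + 2)‖ ≤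
      C * ‖w‖ ^ 2 / (R' : ℝ) ^ 2 * (1 / 2) ^ n := by
    intro n
    have h1 : ‖w ^ (n + 2) * p.coeff (n + 2)‖ ≤ ‖w‖ ^ (n + 2) * (C / (R' : ℝ) ^ (n + 2)) := by
      rw [norm_mul, norm_pow]
      exact mul_le_mul_of_nonneg_left (coeff_bound hR hd hC (n + 2)) (by positivity)
    have h2 : ‖w‖ ^ (n + 2) * (C / (R' : ℝ) ^ (n + 2)) = C * (q ^ 2 * q ^ n) := by
      have hRne : ((R' : ℝ)) ≠ 0 := ne_of_gt hR
      rw [hq, div_pow]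
      field_simp
      rw [div_pow]
      field_simp
      ring
    have h3 : C * (q ^ 2 * q ^ n) ≤ C * (q ^ 2 * (1 / 2) ^ n) := by
      apply mul_le_mul_of_nonneg_left _ hC0
      exact mul_le_mul_of_nonneg_left
        (pow_le_pow_left₀ hq0 hq2 n) (by positivity)
    have h4 : C * (q ^ 2 * (1 / 2) ^ n) = C * ‖w‖ ^ 2 / (R' : ℝ) ^ 2 * (1 / 2) ^ n := by
      rw [hq, div_pow]; ring
    calc ‖w ^ (n + 2) * p.coeff (n + 2)‖ ≤ ‖w‖ ^ (n + 2) * (C / (R' : ℝ) ^ (n + 2)) := h1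
      _ = C * (q ^ 2 * q ^ n) := h2
      _ ≤ C * (q ^ 2 * (1 / 2) ^ n) := h3
      _ = C * ‖w‖ ^ 2 / (R' : ℝ) ^ 2 * (1 / 2) ^ n := h4
  have sumg : Summable (fun n : ℕ => C * ‖w‖ ^ 2 / (R' : ℝ) ^ 2 * (1 / 2 : ℝ) ^ n) :=
    (summable_geometric_of_lt_one (by norm_num) (by norm_num)).mul_left _
  have snorm : Summable (fun n : ℕ => ‖w ^ (n + 2) * p.coeff (n + 2)‖) :=
    Summable.of_nonneg_of_le (fun n => norm_nonneg _) bnd sumg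
  calc ‖g (c + w) - g c - deriv g c * w‖
      = ‖∑' n : ℕ, w ^ (n + 2) * p.coeff (n + 2)‖ := by rw [hs2.tsum_eq]
    _ ≤ ∑' n : ℕ, ‖w ^ (n + 2) * p.coeff (n + 2)‖ := norm_tsum_le_tsum_norm snorm
    _ ≤ ∑' n : ℕ, C * ‖w‖ ^ 2 / (R' : ℝ) ^ 2 * (1 / 2 : ℝ) ^ n := Summable.tsum_le_tsum bnd snorm sumg
    _ = C * ‖w‖ ^ 2 / (R' : ℝ) ^ 2 * (1 - 1 / 2)⁻¹ := by
        rw [tsum_mul_left, tsum_geometric_of_lt_one (by norm_num) (by norm_num)]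
    _ = 2 * C / (R' : ℝ) ^ 2 * ‖w‖ ^ 2 := by norm_num; ring

section multivar
variable {d : ℕ}

lemma slice_hasDerivAt {φ : (Fin d → ℂ) → ℂ} {a : Fin d → ℂ} {r : ℝ} (hr : 0 < r)
    (hd : DifferentiableOn ℂ φ (closedBall a r)) (u : Fin d → ℂ) :
    HasDerivAt (fun w : ℂ => φ (a + w • u)) (fderiv ℂ φ a u) 0 := by
  have h1 : HasFDerivAt φ (fderiv ℂ φ a) a :=
    (hd.differentiableAt (closedBall_mem_nhds a hr)).hasFDerivAt
  have h2 : HasDerivAt (fun w : ℂ => a + w • u) u 0 := by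
    simpa using ((hasDerivAt_id (0 : ℂ)).smul_const u).const_add a
  have h1' : HasFDerivAt φ (fderiv ℂ φ a) ((fun w : ℂ => a + w • u) 0) := by simpa using h1
  exact h1'.comp_hasDerivAt 0 h2

lemma slice_mapsTo {a : Fin d → ℂ} {r : ℝ} {u : Fin d → ℂ} (hu : u ≠ 0) :
    ∀ w ∈ closedBall (0 : ℂ) (r / ‖u‖), a + w • u ∈ closedBall a r := by
  intro w hw
  have hu0 : 0 < ‖u‖ := norm_pos_iff.mpr hu
  rw [mem_closedBall_zero_iff] at hw
  rw [mem_closedBall, dist_eq_norm, add_sub_cancel_left, norm_smul]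
  calc ‖w‖ * ‖u‖ ≤ r / ‖u‖ * ‖u‖ := mul_le_mul_of_nonneg_right hw hu0.le
    _ = r := div_mul_cancel₀ r hu0.ne'

lemma slice_diffOn {φ : (Fin d → ℂ) → ℂ} {a : Fin d → ℂ} {r : ℝ} {u : Fin d → ℂ} (hu : u ≠ 0)
    (hd : DifferentiableOn ℂ φ (closedBall a r)) :
    DifferentiableOn ℂ (fun w : ℂ => φ (a + w • u)) (closedBall 0 (r / ‖u‖)) :=
  hd.comp (((differentiable_id.smul_const u).const_add a).differentiableOn)
    (slice_mapsTo hu)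

lemma KE1 {φ : (Fin d → ℂ) → ℂ} {a : Fin d → ℂ} {r C : ℝ} (hr : 0 < r)
    (hd : DifferentiableOn ℂ φ (closedBall a r))
    (hC : ∀ z ∈ closedBall a r, ‖φ z‖ ≤ C) (u : Fin d → ℂ) :
    ‖fderiv ℂ φ a u‖ ≤ C / r * ‖u‖ := by
  have hC0 : 0 ≤ C := le_trans (norm_nonneg _) (hC a (mem_closedBall_self hr.le))
  rcases eq_or_ne u 0 with rfl | hu
  · simp
  have hu0 : 0 < ‖u‖ := norm_pos_iff.mpr hu
  have hρ : 0 < r / ‖u‖ := by positivity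
  have key := onevar_deriv_bound hρ (slice_diffOn hu hd)
    (fun w hw => hC _ (slice_mapsTo hu w hw))
  rw [(slice_hasDerivAt hr hd u).deriv] at key
  calc ‖fderiv ℂ φ a u‖ ≤ C / (r / ‖u‖) := key
    _ = C / r * ‖u‖ := by field_simp

lemma KE2 {φ : (Fin d → ℂ) → ℂ} {a : Fin d → ℂ} {r C : ℝ} (hr : 0 < r)
    (hd : DifferentiableOn ℂ φ (closedBall a r))
    (hC : ∀ z ∈ closedBall a r, ‖φ z‖ ≤ C) {u : Fin d → ℂ} (hu : ‖u‖ ≤ r / 2) :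
    ‖φ (a + u) - φ a - fderiv ℂ φ a u‖ ≤ 2 * C / r ^ 2 * ‖u‖ ^ 2 := by
  have hC0 : 0 ≤ C := le_trans (norm_nonneg _) (hC a (mem_closedBall_self hr.le))
  rcases eq_or_ne u 0 with rfl | hu'
  · simp
  have hu0 : 0 < ‖u‖ := norm_pos_iff.mpr hu'
  have hρ : 0 < r / ‖u‖ := by positivity
  have hρ2 : 2 ≤ r / ‖u‖ := by
    rw [le_div_iff₀ hu0]; linarith
  have key := onevar_taylor2 hρ (slice_diffOn hu' hd)
    (fun w hw => hC _ (slice_mapsTo hu' w hw)) (w := 1)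
    (by rw [norm_one]; linarith)
  rw [(slice_hasDerivAt hr hd u).deriv] at key
  simp only [zero_add, one_smul, zero_smul, add_zero, mul_one, norm_one, one_pow] at key
  calc ‖φ (a + u) - φ a - fderiv ℂ φ a u‖ ≤ 2 * C / (r / ‖u‖) ^ 2 := key
    _ = 2 * C / r ^ 2 * ‖u‖ ^ 2 := by field_simp

lemma hasFDerivAt_of_quadratic {X : Type*} [NormedAddCommGroup X] [NormedSpace ℂ X]
    {Φ : (Fin d → ℂ) → X} {L : (Fin d → ℂ) →L[ℂ] X} {a : Fin d → ℂ} {r K : ℝ} (hr : 0 < r)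
    (h : ∀ u : Fin d → ℂ, ‖u‖ ≤ r → ‖Φ (a + u) - Φ a - L u‖ ≤ K * ‖u‖ ^ 2) :
    HasFDerivAt Φ L a := by
  rw [hasFDerivAt_iff_isLittleO_nhds_zero, Asymptotics.isLittleO_iff]
  intro ε hε
  have hM : (0 : ℝ) < max K 1 := lt_max_of_lt_right one_pos
  have hδ : 0 < min r (ε / max K 1) := lt_min hr (by positivity)
  rw [Metric.eventually_nhds_iff]
  refine ⟨min r (ε / max K 1), hδ, fun {u} hu => ?_⟩
  have hun : ‖u‖ < min r (ε / max K 1) := by simpa [dist_zero_right] using hu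
  calc ‖Φ (a + u) - Φ a - L u‖ ≤ K * ‖u‖ ^ 2 :=
        h u (le_of_lt (lt_of_lt_of_le hun (min_le_left _ _)))
    _ ≤ max K 1 * (‖u‖ * ‖u‖) := by
        rw [pow_two]
        exact mul_le_mul_of_nonneg_right (le_max_left _ _) (by positivity)
    _ ≤ max K 1 * (ε / max K 1 * ‖u‖) := by
        apply mul_le_mul_of_nonneg_left _ hM.le
        exact mul_le_mul_of_nonneg_right
          (le_of_lt (lt_of_lt_of_le hun (min_le_right _ _))) (norm_nonneg _)
    _ = ε * ‖u‖ := by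
        rw [← mul_assoc, mul_div_cancel₀ _ hM.ne']

end multivar

section smooth
variable {d : ℕ}

lemma pderiv_differentiableOn {U : Set (Fin d → ℂ)} (hU : IsOpen U)
    {h : (Fin d → ℂ) → ℂ} (hd : DifferentiableOn ℂ h U) {e : Fin d → ℂ} (he : ‖e‖ ≤ 1) :
    DifferentiableOn ℂ (fun z => fderiv ℂ h z e) U := by
  intro a ha
  suffices H : DifferentiableAt ℂ (fun z => fderiv ℂ h z e) a from H.differentiableWithinAt
  obtain ⟨δ, hδ, hball⟩ := Metric.isOpen_iff.mp hU a ha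
  set r := δ / 4 with hrdef
  have hr : 0 < r := by positivity
  have hsub : closedBall a (3 * r) ⊆ U := by
    intro z hz
    apply hball
    rw [mem_ball]
    calc dist z a ≤ 3 * r := mem_closedBall.mp hz
      _ < δ := by rw [hrdef]; linarith
  obtain ⟨C, hCb⟩ := (isCompact_closedBall a (3 * r)).exists_bound_of_continuousOn
    (hd.continuousOn.mono hsub)
  have hC0 : 0 ≤ C := le_trans (norm_nonneg _) (hCb a (mem_closedBall_self (by positivity)))
  set Ψ : (Fin d → ℂ) → ℂ := fun z => fderiv ℂ h z e with hΨdef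
  have subball : ∀ z ∈ closedBall a (2 * r), closedBall z r ⊆ closedBall a (3 * r) := by
    intro z hz w hw
    rw [mem_closedBall] at *
    calc dist w a ≤ dist w z + dist z a := dist_triangle _ _ _
      _ ≤ r + 2 * r := add_le_add hw hz
      _ = 3 * r := by ring
  have hdz : ∀ z ∈ closedBall a (2 * r), DifferentiableOn ℂ h (closedBall z r) := by
    intro z hz
    exact hd.mono (Set.Subset.trans (subball z hz) hsub)
  have hCz : ∀ z ∈ closedBall a (2 * r), ∀ w ∈ closedBall z r, ‖h w‖ ≤ C :=
    fun z hz w hw => hCb w (subball z hz hw)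
  have hΨb : ∀ z ∈ closedBall a (2 * r), ‖Ψ z‖ ≤ C / r := by
    intro z hz
    calc ‖Ψ z‖ ≤ C / r * ‖e‖ := KE1 hr (hdz z hz) (hCz z hz) e
      _ ≤ C / r * 1 := mul_le_mul_of_nonneg_left he (by positivity)
      _ = C / r := mul_one _
  set ε : ℕ → ℝ := fun n => r / (n + 2) with hεdef
  have hε : ∀ n, 0 < ε n := fun n => by positivity
  have hε2 : ∀ n, ε n ≤ r / 2 := by
    intro n
    apply div_le_div_of_nonneg_left hr.le (by norm_num)
    exact_mod_cast by linarith [Nat.cast_nonneg (α := ℝ) n]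
  set hn : ℕ → (Fin d → ℂ) → ℂ :=
    fun n z => ((ε n : ℂ))⁻¹ * (h (z + (ε n : ℂ) • e) - h z) with hhndef
  have hεne : ∀ n, ((ε n : ℝ) : ℂ) ≠ 0 := fun n => by exact_mod_cast (hε n).ne'
  have hnorme : ∀ n, ‖((ε n : ℝ) : ℂ) • e‖ ≤ ε n := by
    intro n
    rw [norm_smul, Complex.norm_real, Real.norm_eq_abs, abs_of_pos (hε n)]
    calc ε n * ‖e‖ ≤ ε n * 1 := mul_le_mul_of_nonneg_left he (hε n).le
      _ = ε n := mul_one _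
  -- uniform approximation of Ψ by difference quotients
  have happrox : ∀ n, ∀ z ∈ closedBall a (2 * r), ‖hn n z - Ψ z‖ ≤ 2 * C / r ^ 2 * ε n := by
    intro n z hz
    have hu : ‖((ε n : ℝ) : ℂ) • e‖ ≤ r / 2 := le_trans (hnorme n) (hε2 n)
    have k2 := KE2 hr (hdz z hz) (hCz z hz) hu
    have heq : hn n z - Ψ z =
        ((ε n : ℝ) : ℂ)⁻¹ *
          (h (z + ((ε n : ℝ) : ℂ) • e) - h z - fderiv ℂ h z (((ε n : ℝ) : ℂ) • e)) := by
      rw [ContinuousLinearMap.map_smul, smul_eq_mul, mul_sub, ← mul_assoc,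
        inv_mul_cancel₀ (hεne n), one_mul]
    rw [heq, norm_mul, norm_inv, Complex.norm_real, Real.norm_eq_abs, abs_of_pos (hε n)]
    calc (ε n)⁻¹ * ‖h (z + ((ε n : ℝ) : ℂ) • e) - h z - fderiv ℂ h z (((ε n : ℝ) : ℂ) • e)‖
        ≤ (ε n)⁻¹ * (2 * C / r ^ 2 * ‖((ε n : ℝ) : ℂ) • e‖ ^ 2) :=
          mul_le_mul_of_nonneg_left k2 (by positivity)
      _ ≤ (ε n)⁻¹ * (2 * C / r ^ 2 * (ε n) ^ 2) := by
          apply mul_le_mul_of_nonneg_left _ (by positivity)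
          exact mul_le_mul_of_nonneg_left
            (pow_le_pow_left₀ (norm_nonneg _) (hnorme n) 2) (by positivity)
      _ = 2 * C / r ^ 2 * ε n := by field_simp [(hε n).ne']
  -- differentiability of the quotients
  have hdiff_hn : ∀ n, ∀ z ∈ closedBall a (2 * r), DifferentiableAt ℂ (hn n) z := by
    intro n z hz
    have hz3 : z ∈ closedBall a (3 * r) :=
      closedBall_subset_closedBall (by linarith) hz
    have hz3' : z + ((ε n : ℝ) : ℂ) • e ∈ closedBall a (3 * r) := by
      rw [mem_closedBall] at *
      calc dist (z + ((ε n : ℝ) : ℂ) • e) a ≤ dist (z + ((ε n : ℝ) : ℂ) • e) z + dist z a :=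
            dist_triangle _ _ _
        _ ≤ r / 2 + 2 * r := by
            apply add_le_add _ hz
            rw [dist_eq_norm, add_sub_cancel_left]
            exact le_trans (hnorme n) (hε2 n)
        _ ≤ 3 * r := by linarith
    have h1 : DifferentiableAt ℂ h z := hd.differentiableAt (hU.mem_nhds (hsub hz3))
    have h2 : DifferentiableAt ℂ (fun w => h (w + ((ε n : ℝ) : ℂ) • e)) z :=
      (hd.differentiableAt (hU.mem_nhds (hsub hz3'))).comp z (differentiable_id.add_const _).differentiableAt
    exact ((h2.sub h1).const_mul _)
  set M : ℕ → (Fin d → ℂ) →L[ℂ] ℂ := fun n => fderiv ℂ (hn n) a with hMdef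
  have haball : a ∈ closedBall a (2 * r) := mem_closedBall_self (by positivity)
  have hsubinner : closedBall a r ⊆ closedBall a (2 * r) :=
    closedBall_subset_closedBall (by linarith)
  have hMa : ∀ n m : ℕ, ‖M n - M m‖ ≤ 2 * C / r ^ 2 * (ε n + ε m) / r := by
    intro n m
    have hdnm : DifferentiableOn ℂ (hn n - hn m) (closedBall a r) := fun z hz =>
      ((hdiff_hn n z (hsubinner hz)).sub (hdiff_hn m z (hsubinner hz))).differentiableWithinAt
    have hbnm : ∀ z ∈ closedBall a r, ‖(hn n - hn m) z‖ ≤ 2 * C / r ^ 2 * (ε n + ε m) := by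
      intro z hz
      have t1 := happrox n z (hsubinner hz)
      have t2 := happrox m z (hsubinner hz)
      calc ‖(hn n - hn m) z‖ = ‖(hn n z - Ψ z) - (hn m z - Ψ z)‖ := by
            simp only [Pi.sub_apply]; ring_nf
        _ ≤ ‖hn n z - Ψ z‖ + ‖hn m z - Ψ z‖ := norm_sub_le _ _
        _ ≤ 2 * C / r ^ 2 * ε n + 2 * C / r ^ 2 * ε m := add_le_add t1 t2
        _ = 2 * C / r ^ 2 * (ε n + ε m) := by ring
    apply ContinuousLinearMap.opNorm_le_bound _ (by positivity)
    intro u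
    have hfd : fderiv ℂ (hn n - hn m) a = M n - M m := by
      rw [hMdef]
      exact fderiv_sub (hdiff_hn n a haball) (hdiff_hn m a haball)
    calc ‖(M n - M m) u‖ = ‖fderiv ℂ (hn n - hn m) a u‖ := by rw [hfd]
      _ ≤ 2 * C / r ^ 2 * (ε n + ε m) / r * ‖u‖ := KE1 hr hdnm hbnm u
  have hεmono : ∀ N n, N ≤ n → ε n ≤ ε N := by
    intro N n hNn
    apply div_le_div_of_nonneg_left hr.le (by positivity)
    exact_mod_cast by exact_mod_cast add_le_add_left (Nat.cast_le.mpr hNn) 2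
  have hεtend : Filter.Tendsto ε Filter.atTop (nhds 0) := by
    rw [hεdef]
    have h1 : Filter.Tendsto (fun n : ℕ => ((n : ℝ) + 2)) Filter.atTop Filter.atTop :=
      Filter.tendsto_atTop_add_const_right _ 2 tendsto_natCast_atTop_atTop
    have h2 : Filter.Tendsto (fun n : ℕ => ((n : ℝ) + 2)⁻¹) Filter.atTop (nhds 0) :=
      tendsto_inv_atTop_zero.comp h1
    have := h2.const_mul r
    simpa [div_eq_mul_inv] using this
  have hcauchy : CauchySeq M := by
    apply cauchySeq_of_le_tendsto_0 (fun N => 2 * C / r ^ 2 * (ε N + ε N) / r)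
    · intro n m N hn' hm'
      rw [dist_eq_norm]
      calc ‖M n - M m‖ ≤ 2 * C / r ^ 2 * (ε n + ε m) / r := hMa n m
        _ ≤ 2 * C / r ^ 2 * (ε N + ε N) / r := by
            gcongr
            · exact hεmono N n hn'
            · exact hεmono N m hm'
    · have h1 : (fun N => 2 * C / r ^ 2 * (ε N + ε N) / r) =
          fun N => 4 * C / r ^ 3 * ε N := by
        funext N; field_simp; ring
      rw [h1]
      simpa using hεtend.const_mul (4 * C / r ^ 3)
  obtain ⟨Mlim, hMlim⟩ := cauchySeq_tendsto_of_complete hcauchy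
  have hnormM : Filter.Tendsto (fun n => ‖M n - Mlim‖) Filter.atTop (nhds 0) :=
    tendsto_iff_norm_sub_tendsto_zero.mp hMlim
  have hhnb : ∀ n, ∀ z ∈ closedBall a r, ‖hn n z‖ ≤ 2 * C / r := by
    intro n z hz
    have t1 := happrox n z (hsubinner hz)
    have t2 := hΨb z (hsubinner hz)
    calc ‖hn n z‖ = ‖Ψ z + (hn n z - Ψ z)‖ := by rw [add_sub_cancel]
      _ ≤ ‖Ψ z‖ + ‖hn n z - Ψ z‖ := norm_add_le _ _
      _ ≤ C / r + 2 * C / r ^ 2 * ε n := add_le_add t2 t1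
      _ ≤ C / r + 2 * C / r ^ 2 * (r / 2) := by gcongr; exact hε2 n
      _ = 2 * C / r := by field_simp; ring
  have hmid : ∀ n, ∀ u : Fin d → ℂ, ‖u‖ ≤ r / 2 →
      ‖hn n (a + u) - hn n a - M n u‖ ≤ 2 * (2 * C / r) / r ^ 2 * ‖u‖ ^ 2 := by
    intro n u hu
    exact KE2 hr
      (fun z hz => (hdiff_hn n z (hsubinner hz)).differentiableWithinAt) (hhnb n) hu
  have hquad : ∀ u : Fin d → ℂ, ‖u‖ ≤ r / 2 →
      ‖Ψ (a + u) - Ψ a - Mlim u‖ ≤ 4 * C / r ^ 3 * ‖u‖ ^ 2 := by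
    intro u hu
    have hau : a + u ∈ closedBall a (2 * r) := by
      rw [mem_closedBall, dist_eq_norm, add_sub_cancel_left]
      linarith
    have hstep : ∀ n, ‖Ψ (a + u) - Ψ a - Mlim u‖ ≤
        2 * C / r ^ 2 * ε n + (2 * (2 * C / r) / r ^ 2 * ‖u‖ ^ 2 +
          (2 * C / r ^ 2 * ε n + ‖M n - Mlim‖ * ‖u‖)) := by
      intro n
      have e1 := happrox n (a + u) hau
      have e2 := hmid n u hu
      have e3 := happrox n a haball
      have e4 : ‖(M n - Mlim) u‖ ≤ ‖M n - Mlim‖ * ‖u‖ :=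
        ContinuousLinearMap.le_opNorm _ _
      have hdecomp : Ψ (a + u) - Ψ a - Mlim u =
          (Ψ (a + u) - hn n (a + u)) + ((hn n (a + u) - hn n a - M n u) +
            ((hn n a - Ψ a) + (M n - Mlim) u)) := by
        simp only [ContinuousLinearMap.sub_apply]
        ring
      rw [hdecomp]
      refine le_trans (norm_add_le _ _) (add_le_add ?_ (le_trans (norm_add_le _ _)
        (add_le_add e2 (le_trans (norm_add_le _ _) (add_le_add ?_ e4)))))
      · rw [norm_sub_rev]; exact e1
      · exact e3
    have hlim : Filter.Tendsto (fun n => 2 * C / r ^ 2 * ε n +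
        (2 * (2 * C / r) / r ^ 2 * ‖u‖ ^ 2 + (2 * C / r ^ 2 * ε n + ‖M n - Mlim‖ * ‖u‖)))
        Filter.atTop (nhds (2 * C / r ^ 2 * 0 +
        (2 * (2 * C / r) / r ^ 2 * ‖u‖ ^ 2 + (2 * C / r ^ 2 * 0 + 0 * ‖u‖)))) := by
      exact ((hεtend.const_mul _).add (tendsto_const_nhds.add
        ((hεtend.const_mul _).add (hnormM.mul_const _))))
    have hfin := ge_of_tendsto hlim (Filter.Eventually.of_forall hstep)
    calc ‖Ψ (a + u) - Ψ a - Mlim u‖ ≤ 2 * C / r ^ 2 * 0 +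
          (2 * (2 * C / r) / r ^ 2 * ‖u‖ ^ 2 + (2 * C / r ^ 2 * 0 + 0 * ‖u‖)) := hfin
      _ = 4 * C / r ^ 3 * ‖u‖ ^ 2 := by field_simp; ring
  exact (hasFDerivAt_of_quadratic (by positivity : (0:ℝ) < r / 2) hquad).differentiableAt

end smooth

section core
variable {d : ℕ} {Ω : Type*} {E : Submodule ℂ (lp (fun _ : Ω => ℂ) ∞)}

lemma tend_aux (s : ℝ) : Filter.Tendsto (fun n : ℕ => s / ((n : ℝ) + 1))
    Filter.atTop (nhds 0) := by
  have h1 : Filter.Tendsto (fun n : ℕ => ((n : ℝ) + 1)) Filter.atTop Filter.atTop :=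
    Filter.tendsto_atTop_add_const_right _ 1 tendsto_natCast_atTop_atTop
  have h2 := tendsto_inv_atTop_zero.comp h1
  have := h2.const_mul s
  simpa [div_eq_mul_inv] using this

/-- evaluation at a point as a continuous linear functional on `E` -/
noncomputable def evE (E : Submodule ℂ (lp (fun _ : Ω => ℂ) ∞)) (t : Ω) : ↥E →L[ℂ] ℂ :=
  LinearMap.mkContinuous
    { toFun := fun x => ((x : lp (fun _ : Ω => ℂ) ∞) : ∀ _ : Ω, ℂ) t
      map_add' := fun x y => by
        simp only [Submodule.coe_add, lp.coeFn_add, Pi.add_apply]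
      map_smul' := fun c x => by
        simp only [Submodule.coe_smul, lp.coeFn_smul, Pi.smul_apply, RingHom.id_apply,
          smul_eq_mul] }
    1 (fun x => by
      rw [one_mul]
      calc ‖((x : lp (fun _ : Ω => ℂ) ∞) : ∀ _ : Ω, ℂ) t‖
          ≤ ‖(x : lp (fun _ : Ω => ℂ) ∞)‖ := lp.norm_apply_le_norm ENNReal.top_ne_zero _ t
        _ = ‖x‖ := (Submodule.coe_norm x).symm)

lemma evE_apply (t : Ω) (x : ↥E) : evE E t x = ((x : lp (fun _ : Ω => ℂ) ∞) : ∀ _ : Ω, ℂ) t :=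
  rfl

lemma ext_evE {x y : ↥E} (h : ∀ t, evE E t x = evE E t y) : x = y :=
  Subtype.ext (lp.ext (funext h))

lemma norm_le_of_evE {x : ↥E} {C : ℝ} (hC : 0 ≤ C) (h : ∀ t, ‖evE E t x‖ ≤ C) : ‖x‖ ≤ C := by
  rw [Submodule.coe_norm]
  exact lp.norm_le_of_forall_le hC h
lemma core_diffOn (hE : IsClosed (E : Set (lp (fun _ : Ω => ℂ) ∞)))
    {U : Set (Fin d → ℂ)} (hU : IsOpen U)
    {g : (Fin d → ℂ) → Ω → ℂ} {G : (Fin d → ℂ) → ↥E}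
    (hmatch : ∀ z ∈ U, ∀ t, evE E t (G z) = g z t)
    (hholo : ∀ t, DifferentiableOn ℂ (fun z => g z t) U)
    (hbd : ∀ a ∈ U, ∃ r C : ℝ, 0 < r ∧ closedBall a r ⊆ U ∧
      ∀ z ∈ closedBall a r, ∀ t, ‖g z t‖ ≤ C) :
    DifferentiableOn ℂ G U := by
  haveI : Fact ((1 : ℝ≥0∞) ≤ ∞) := ⟨le_top⟩
  haveI : CompleteSpace ↥E := hE.completeSpace_coe
  intro a ha
  obtain ⟨r, C, hr, hrU, hC⟩ := hbd a ha
  set C' := max C 0 with hC'def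
  have hC0 : 0 ≤ C' := le_max_right _ _
  have hC' : ∀ z ∈ closedBall a r, ∀ t, ‖g z t‖ ≤ C' :=
    fun z hz t => le_trans (hC z hz t) (le_max_left _ _)
  have k2 : ∀ t, ∀ u : Fin d → ℂ, ‖u‖ ≤ r / 2 →
      ‖g (a + u) t - g a t - fderiv ℂ (fun z => g z t) a u‖ ≤ 2 * C' / r ^ 2 * ‖u‖ ^ 2 := by
    intro t u hu
    have := KE2 hr ((hholo t).mono hrU) (fun z hz => hC' z hz t) hu
    simpa using this
  have key : ∀ u : Fin d → ℂ, ∃ ξ : ↥E, ∀ t,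
      evE E t ξ = fderiv ℂ (fun z => g z t) a u := by
    intro u
    set s : ℝ := r / (2 * (‖u‖ + 1)) with hs
    have hs0 : 0 < s := by positivity
    set ε : ℕ → ℝ := fun n => s / ((n : ℝ) + 1) with hεdef
    have hε0 : ∀ n, 0 < ε n := fun n => by positivity
    have hεs : ∀ n, ε n ≤ s := by
      intro n
      apply div_le_self hs0.le
      exact_mod_cast by linarith [Nat.cast_nonneg (α := ℝ) n]
    have hεnorm : ∀ n, ‖((ε n : ℝ) : ℂ) • u‖ = ε n * ‖u‖ := by
      intro n
      rw [norm_smul, Complex.norm_real, Real.norm_eq_abs, abs_of_pos (hε0 n)]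
    have hεu : ∀ n, ‖((ε n : ℝ) : ℂ) • u‖ ≤ r / 2 := by
      intro n
      rw [hεnorm n]
      calc ε n * ‖u‖ ≤ s * (‖u‖ + 1) := by
            apply mul_le_mul (hεs n) (by linarith) (norm_nonneg u) hs0.le
        _ = r / 2 := by rw [hs]; field_simp
    have hmemn : ∀ n, a + ((ε n : ℝ) : ℂ) • u ∈ closedBall a r := by
      intro n
      rw [mem_closedBall, dist_eq_norm, add_sub_cancel_left]
      linarith [hεu n]
    set y : ℕ → ↥E := fun n => (((ε n : ℝ) : ℂ))⁻¹ • (G (a + ((ε n : ℝ) : ℂ) • u) - G a)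
      with hydef
    have hεne : ∀ n, (((ε n : ℝ)) : ℂ) ≠ 0 := fun n => by exact_mod_cast (hε0 n).ne'
    have hyev : ∀ n t, evE E t (y n) =
        ((ε n : ℝ) : ℂ)⁻¹ * (g (a + ((ε n : ℝ) : ℂ) • u) t - g a t) := by
      intro n t
      rw [hydef]
      simp only [map_smul, map_sub, smul_eq_mul]
      rw [hmatch _ (hrU (hmemn n)) t, hmatch a ha t]
    have hdist : ∀ n t, ‖evE E t (y n) - fderiv ℂ (fun z => g z t) a u‖ ≤
        2 * C' / r ^ 2 * ‖u‖ ^ 2 * ε n := by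
      intro n t
      have h2 := k2 t (((ε n : ℝ) : ℂ) • u) (hεu n)
      rw [ContinuousLinearMap.map_smul] at h2
      have heq : evE E t (y n) - fderiv ℂ (fun z => g z t) a u =
          ((ε n : ℝ) : ℂ)⁻¹ * (g (a + ((ε n : ℝ) : ℂ) • u) t - g a t -
            ((ε n : ℝ) : ℂ) • fderiv ℂ (fun z => g z t) a u) := by
        rw [hyev n t, smul_eq_mul]
        conv_rhs => rw [mul_sub, ← mul_assoc, inv_mul_cancel₀ (hεne n), one_mul]
      rw [heq, norm_mul, norm_inv, Complex.norm_real, Real.norm_eq_abs, abs_of_pos (hε0 n)]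
      calc (ε n)⁻¹ * ‖g (a + ((ε n : ℝ) : ℂ) • u) t - g a t -
            ((ε n : ℝ) : ℂ) • fderiv ℂ (fun z => g z t) a u‖
          ≤ (ε n)⁻¹ * (2 * C' / r ^ 2 * ‖((ε n : ℝ) : ℂ) • u‖ ^ 2) :=
            mul_le_mul_of_nonneg_left h2 (by positivity)
        _ = (ε n)⁻¹ * (2 * C' / r ^ 2 * (ε n * ‖u‖) ^ 2) := by rw [hεnorm n]
        _ = 2 * C' / r ^ 2 * ‖u‖ ^ 2 * ε n := by field_simp [(hε0 n).ne']
    have hεtend : Filter.Tendsto ε Filter.atTop (nhds 0) := tend_aux s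
    have hcau : CauchySeq y := by
      apply cauchySeq_of_le_tendsto_0 (fun N => 2 * (2 * C' / r ^ 2 * ‖u‖ ^ 2 * ε N))
      · intro n m N hn hm
        rw [dist_eq_norm]
        have hεm : ∀ k, N ≤ k → ε k ≤ ε N := by
          intro k hk
          apply div_le_div_of_nonneg_left hs0.le (by positivity)
          exact_mod_cast by exact_mod_cast add_le_add_left (Nat.cast_le.mpr hk) 1
        apply norm_le_of_evE (by positivity)
        intro t
        rw [map_sub]
        calc ‖evE E t (y n) - evE E t (y m)‖
            ≤ ‖evE E t (y n) - fderiv ℂ (fun z => g z t) a u‖ +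
              ‖evE E t (y m) - fderiv ℂ (fun z => g z t) a u‖ := by
              have htr := dist_triangle (evE E t (y n))
                (fderiv ℂ (fun z => g z t) a u) (evE E t (y m))
              rw [dist_eq_norm, dist_eq_norm, dist_eq_norm] at htr
              rw [norm_sub_rev (fderiv ℂ (fun z => g z t) a u)] at htr
              exact htr
          _ ≤ 2 * C' / r ^ 2 * ‖u‖ ^ 2 * ε n + 2 * C' / r ^ 2 * ‖u‖ ^ 2 * ε m :=
              add_le_add (hdist n t) (hdist m t)
          _ ≤ 2 * (2 * C' / r ^ 2 * ‖u‖ ^ 2 * ε N) := by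
              have l1 : 2 * C' / r ^ 2 * ‖u‖ ^ 2 * ε n ≤ 2 * C' / r ^ 2 * ‖u‖ ^ 2 * ε N :=
                mul_le_mul_of_nonneg_left (hεm n hn) (by positivity)
              have l2 : 2 * C' / r ^ 2 * ‖u‖ ^ 2 * ε m ≤ 2 * C' / r ^ 2 * ‖u‖ ^ 2 * ε N :=
                mul_le_mul_of_nonneg_left (hεm m hm) (by positivity)
              linarith
      · simpa using (hεtend.const_mul (2 * (2 * C' / r ^ 2 * ‖u‖ ^ 2))).congr
          (fun n => by ring)
    obtain ⟨ξ, hξ⟩ := cauchySeq_tendsto_of_complete hcau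
    refine ⟨ξ, fun t => ?_⟩
    have h1 : Filter.Tendsto (fun n => evE E t (y n)) Filter.atTop (nhds (evE E t ξ)) :=
      ((evE E t).continuous.tendsto _).comp hξ
    have h2 : Filter.Tendsto (fun n => evE E t (y n)) Filter.atTop
        (nhds (fderiv ℂ (fun z => g z t) a u)) := by
      rw [tendsto_iff_norm_sub_tendsto_zero]
      apply squeeze_zero (fun n => norm_nonneg _) (fun n => hdist n t)
      simpa using hεtend.const_mul (2 * C' / r ^ 2 * ‖u‖ ^ 2)
    exact tendsto_nhds_unique h1 h2
  choose Lf hLf using key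
  have hadd : ∀ u v, Lf (u + v) = Lf u + Lf v := by
    intro u v
    apply ext_evE; intro t
    rw [map_add, hLf, hLf, hLf, (fderiv ℂ (fun z => g z t) a).map_add]
  have hsmul : ∀ (c : ℂ) u, Lf (c • u) = c • Lf u := by
    intro c u
    apply ext_evE; intro t
    rw [map_smul, hLf, hLf, (fderiv ℂ (fun z => g z t) a).map_smul, smul_eq_mul]
  set L0 : (Fin d → ℂ) →ₗ[ℂ] ↥E :=
    { toFun := Lf, map_add' := hadd, map_smul' := hsmul } with hL0
  set L : (Fin d → ℂ) →L[ℂ] ↥E := LinearMap.toContinuousLinearMap L0 with hL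
  have hquad : ∀ u : Fin d → ℂ, ‖u‖ ≤ r / 2 →
      ‖G (a + u) - G a - L u‖ ≤ 2 * C' / r ^ 2 * ‖u‖ ^ 2 := by
    intro u hu
    have haU : a + u ∈ U := hrU (by
      rw [mem_closedBall, dist_eq_norm, add_sub_cancel_left]; linarith)
    apply norm_le_of_evE (by positivity)
    intro t
    rw [map_sub, map_sub]
    have hLu : evE E t (L u) = fderiv ℂ (fun z => g z t) a u := hLf u t
    rw [hLu, hmatch _ haU t, hmatch a ha t]
    exact k2 t u hu
  exact (hasFDerivAt_of_quadratic (by positivity : (0:ℝ) < r / 2)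
    hquad).differentiableAt.differentiableWithinAt

end core

section mainlemmas
variable {d : ℕ} {Ω : Type*}

/-- derivative step on parametrized families of scalar functions -/
noncomputable def stepS (j : Fin d) (g : (Fin d → ℂ) → Ω → ℂ) : (Fin d → ℂ) → Ω → ℂ :=
  fun z t => pderiv' j (fun w => g w t) z

/-- invariant for the induction on multi-indices -/
def GOOD (O : Set (Fin d → ℂ)) (E : Submodule ℂ (lp (fun _ : Ω => ℂ) ∞))
    (g : (Fin d → ℂ) → Ω → ℂ) (G : (Fin d → ℂ) → ↥E) : Prop :=
  (∀ t, DifferentiableOn ℂ (fun z => g z t) O) ∧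
  (∀ z ∈ O, ∀ t, evE E t (G z) = g z t) ∧
  (∀ a ∈ O, ∃ r C : ℝ, 0 < r ∧ closedBall a r ⊆ O ∧
    ∀ z ∈ closedBall a r, ∀ t, ‖g z t‖ ≤ C)

lemma norm_single_le_one (j : Fin d) : ‖(Pi.single j 1 : Fin d → ℂ)‖ ≤ 1 := by
  apply pi_norm_le_iff_of_nonneg zero_le_one |>.mpr
  intro i
  rcases eq_or_ne i j with rfl | hij
  · simp
  · rw [Pi.single_apply, if_neg hij]; simp

variable {O : Set (Fin d → ℂ)} {E : Submodule ℂ (lp (fun _ : Ω => ℂ) ∞)}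

lemma good_step (hE : IsClosed (E : Set (lp (fun _ : Ω => ℂ) ∞))) (hO : IsOpen O)
    {g : (Fin d → ℂ) → Ω → ℂ} {G : (Fin d → ℂ) → ↥E}
    (h : GOOD O E g G) (j : Fin d) :
    GOOD O E (stepS j g) (pderiv' j G) := by
  obtain ⟨h1, h2, h3⟩ := h
  have hGdiff : DifferentiableOn ℂ G O := core_diffOn hE hO h2 h1 h3
  have he : ‖(Pi.single j 1 : Fin d → ℂ)‖ ≤ 1 := norm_single_le_one j
  refine ⟨?_, ?_, ?_⟩
  · intro t
    exact pderiv_differentiableOn hO (h1 t) he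
  · intro z hz t
    have hzat : DifferentiableAt ℂ G z := hGdiff.differentiableAt (hO.mem_nhds hz)
    have hcomp : HasFDerivAt (fun w => evE E t (G w)) ((evE E t).comp (fderiv ℂ G z)) z :=
      (evE E t).hasFDerivAt.comp z hzat.hasFDerivAt
    have heq : (fun w => evE E t (G w)) =ᶠ[nhds z] (fun w => g w t) :=
      Filter.eventuallyEq_of_mem (hO.mem_nhds hz) (fun w hw => h2 w hw t)
    have hfd : fderiv ℂ (fun w => g w t) z = (evE E t).comp (fderiv ℂ G z) := by
      rw [← heq.fderiv_eq]
      exact hcomp.fderiv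
    show evE E t (fderiv ℂ G z (Pi.single j 1)) = fderiv ℂ (fun w => g w t) z (Pi.single j 1)
    rw [hfd]
    rfl
  · intro a ha
    obtain ⟨r, C, hr, hrO, hC⟩ := h3 a ha
    refine ⟨r / 2, max C 0 / (r / 2), by positivity,
      Set.Subset.trans (closedBall_subset_closedBall (by linarith)) hrO, ?_⟩
    intro z hz t
    have hsub2 : closedBall z (r / 2) ⊆ closedBall a r := by
      intro w hw
      rw [mem_closedBall] at *
      calc dist w a ≤ dist w z + dist z a := dist_triangle _ _ _
        _ ≤ r / 2 + r / 2 := add_le_add hw hz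
        _ = r := by ring
    have hk := KE1 (by positivity : (0:ℝ) < r / 2)
      ((h1 t).mono (Set.Subset.trans hsub2 hrO))
      (fun w hw => le_trans (hC w (hsub2 hw) t) (le_max_left C (0:ℝ))) (Pi.single j 1)
    calc ‖stepS j g z t‖ = ‖fderiv ℂ (fun w => g w t) z (Pi.single j 1)‖ := rfl
      _ ≤ max C 0 / (r / 2) * ‖(Pi.single j 1 : Fin d → ℂ)‖ := hk
      _ ≤ max C 0 / (r / 2) * 1 := mul_le_mul_of_nonneg_left he (by positivity)
      _ = max C 0 / (r / 2) := mul_one _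

lemma good_iter (hE : IsClosed (E : Set (lp (fun _ : Ω => ℂ) ∞))) (hO : IsOpen O)
    (j : Fin d) (m : ℕ) :
    ∀ {g : (Fin d → ℂ) → Ω → ℂ} {G : (Fin d → ℂ) → ↥E}, GOOD O E g G →
      GOOD O E ((stepS j)^[m] g) ((pderiv' j)^[m] G) := by
  induction m with
  | zero => intro g G h; simpa using h
  | succ m ih =>
      intro g G h
      rw [Function.iterate_succ_apply', Function.iterate_succ_apply']
      exact good_step hE hO (ih h) j

lemma fin_foldr_induction : ∀ {n : ℕ} {α : Type*} (f : Fin n → α → α) (P : α → Prop),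
    (∀ j x, P x → P (f j x)) → ∀ x, P x → P (Fin.foldr n f x)
  | 0, α, f, P, hf, x, hx => by simpa using hx
  | (n + 1), α, f, P, hf, x, hx => by
      rw [Fin.foldr_succ]
      exact hf 0 _ (fin_foldr_induction (fun i => f i.succ) P
        (fun j y hy => hf j.succ y hy) x hx)

lemma fin_foldr_natural : ∀ {n : ℕ} {α β : Type*} (k : α → β) (f : Fin n → α → α)
    (f' : Fin n → β → β), (∀ j x, k (f j x) = f' j (k x)) →
    ∀ x, k (Fin.foldr n f x) = Fin.foldr n f' (k x)
  | 0, α, β, k, f, f', hk, x => by simp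
  | (n + 1), α, β, k, f, f', hk, x => by
      rw [Fin.foldr_succ, Fin.foldr_succ, hk,
        fin_foldr_natural k (fun i => f i.succ) (fun i => f' i.succ)
          (fun j y => hk j.succ y) x]

end mainlemmas

end Aux

/-- Let `Ω` be a set, `E` a closed subspace of `ℓ^∞(Ω)`, `O ⊆ ℂᵈ` open and
`f : O × Ω → ℂ` bounded, with `f(z,·) ∈ E` for `z ∈ O` (witnessed by `F`) and `f(·,t)`
holomorphic for each `t`. Then `F : O → E` is bounded and holomorphic, and for every
`a ∈ O` and multi-index `α`, the function `t ↦ D^α_z f(z,t)|_{z=a}` belongs to `E`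
and equals `D^α F(a)`. -/
theorem holomorphy_into_closed_subspace_of_ellinfty
    {d : ℕ} (O : Set (Fin d → ℂ)) (hO : IsOpen O)
    {Ω : Type*} (E : Submodule ℂ (lp (fun _ : Ω => ℂ) ∞))
    (hE : IsClosed (E : Set (lp (fun _ : Ω => ℂ) ∞)))
    (f : (Fin d → ℂ) → Ω → ℂ)
    (hbdd : ∃ C : ℝ, ∀ z ∈ O, ∀ t, ‖f z t‖ ≤ C)
    (F : (Fin d → ℂ) → E)
    (hF : ∀ z ∈ O, ∀ t : Ω, (E.subtype (F z) : ∀ _ : Ω, ℂ) t = f z t)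
    (hholo : ∀ t : Ω, DifferentiableOn ℂ (fun z => f z t) O) :
    (DifferentiableOn ℂ F O ∧ ∃ C : ℝ, ∀ z ∈ O, ‖F z‖ ≤ C) ∧
      ∀ (α : Fin d → ℕ), ∀ a ∈ O, ∀ t : Ω,
        (E.subtype (Dpartial α F a) : ∀ _ : Ω, ℂ) t =
          Dpartial α (fun z => f z t) a := by

  obtain ⟨C, hCb⟩ := hbdd
  have hmatch : ∀ z ∈ O, ∀ t, evE E t (F z) = f z t := fun z hz t => hF z hz t
  have hlocbd : ∀ a ∈ O, ∃ r C' : ℝ, 0 < r ∧ Metric.closedBall a r ⊆ O ∧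
      ∀ z ∈ Metric.closedBall a r, ∀ t, ‖f z t‖ ≤ C' := by
    intro a ha
    obtain ⟨δ, hδ, hball⟩ := Metric.isOpen_iff.mp hO a ha
    refine ⟨δ / 2, C, by positivity,
      Set.Subset.trans (Metric.closedBall_subset_ball (by linarith)) hball, ?_⟩
    intro z hz t
    exact hCb z (hball (Metric.closedBall_subset_ball (by linarith) hz)) t
  have hGOOD : GOOD O E f F := ⟨hholo, hmatch, hlocbd⟩
  constructor
  · constructor
    · exact core_diffOn hE hO hmatch hholo hlocbd
    · refine ⟨max C 0, fun z hz => ?_⟩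
      apply norm_le_of_evE (le_max_right _ _)
      intro t
      rw [hmatch z hz t]
      exact le_trans (hCb z hz t) (le_max_left _ _)
  · intro α a ha t
    have hpair : GOOD O E
        (Fin.foldr d (fun j g => (stepS j)^[α j] g) f)
        (Fin.foldr d (fun j G => (pderiv' j)^[α j] G) F) := by
      have hind := fin_foldr_induction
        (fun (j : Fin d) (p : ((Fin d → ℂ) → Ω → ℂ) × ((Fin d → ℂ) → ↥E)) =>
          ((stepS j)^[α j] p.1, (pderiv' j)^[α j] p.2))
        (fun p => GOOD O E p.1 p.2)
        (fun j p hp => good_iter hE hO j (α j) hp) (f, F) hGOOD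
      have hfst := fin_foldr_natural Prod.fst
        (fun (j : Fin d) (p : ((Fin d → ℂ) → Ω → ℂ) × ((Fin d → ℂ) → ↥E)) =>
          ((stepS j)^[α j] p.1, (pderiv' j)^[α j] p.2))
        (fun j g => (stepS j)^[α j] g) (fun j p => rfl) (f, F)
      have hsnd := fin_foldr_natural Prod.snd
        (fun (j : Fin d) (p : ((Fin d → ℂ) → Ω → ℂ) × ((Fin d → ℂ) → ↥E)) =>
          ((stepS j)^[α j] p.1, (pderiv' j)^[α j] p.2))
        (fun j G => (pderiv' j)^[α j] G) (fun j p => rfl) (f, F)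
      have hind' : GOOD O E
          (Fin.foldr d (fun (j : Fin d)
            (p : ((Fin d → ℂ) → Ω → ℂ) × ((Fin d → ℂ) → ↥E)) =>
            ((stepS j)^[α j] p.1, (pderiv' j)^[α j] p.2)) (f, F)).1
          (Fin.foldr d (fun (j : Fin d)
            (p : ((Fin d → ℂ) → Ω → ℂ) × ((Fin d → ℂ) → ↥E)) =>
            ((stepS j)^[α j] p.1, (pderiv' j)^[α j] p.2)) (f, F)).2 := hind
      rw [hfst, hsnd] at hind'
      exact hind'
    have hval : evE E t (Dpartial α F a) =
        Fin.foldr d (fun j g => (stepS j)^[α j] g) f a t := hpair.2.1 a ha t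
    have hscalar : (fun z => Fin.foldr d (fun j g => (stepS j)^[α j] g) f z t) =
        Dpartial α (fun z => f z t) := by
      have hk : ∀ (j : Fin d) (g : (Fin d → ℂ) → Ω → ℂ),
          (fun z => ((stepS j)^[α j] g) z t) = (pderiv' j)^[α j] (fun z => g z t) := by
        intro j g
        have hsem : Function.Semiconj
            (fun (g : (Fin d → ℂ) → Ω → ℂ) => (fun z => g z t))
            (stepS j) (pderiv' j) := fun g => rfl
        exact (hsem.iterate_right (α j)) g
      exact fin_foldr_natural
        (fun (g : (Fin d → ℂ) → Ω → ℂ) => (fun z => g z t))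
        (fun j g => (stepS j)^[α j] g)
        (fun j h => (pderiv' j)^[α j] h) hk f
    calc (E.subtype (Dpartial α F a) : ∀ _ : Ω, ℂ) t
        = evE E t (Dpartial α F a) := rfl
      _ = Fin.foldr d (fun j g => (stepS j)^[α j] g) f a t := hval
      _ = Dpartial α (fun z => f z t) a := congrFun hscalar a
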